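/- The function V(R, ω) = (1/2) ωᵀJω + mg(‖ρ‖ − ρᵀRᵀe₃) is nonnegative on SO(3) × ℝ³, vanishes exactly when ω = 0 and Rᵀe₃ = ρ/‖ρ‖, and its time derivative along any solution of the 3D pendulum equations is identically zero. -/

import Mathlib

/-!
Cauchy–Schwarz against the unit vector `v = Rᵀe₃` makes the potential term nonnegative, with
equality exactly when `v` is the unit vector along `ρ`; positive definiteness of `J` handles the
kinetic term. Along a solution `v̇ = v × ω`, so the potential energy changes at rate
`-mg ω ⬝ (ρ × v)`, while the kinetic energy changes at rate `ω ⬝ Jω̇ = mg ω ⬝ (ρ × v)` because the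
gyroscopic torque `Jω × ω` is orthogonal to `ω`.
-/

open Matrix

attribute [local instance] Matrix.frobeniusNormedAddCommGroup Matrix.frobeniusNormedSpace

noncomputable def hat (ω : Fin 3 → ℝ) : Matrix (Fin 3) (Fin 3) ℝ :=
  !![0, -ω 2, ω 1; ω 2, 0, -ω 0; -ω 1, ω 0, 0]

def SO3 : Set (Matrix (Fin 3) (Fin 3) ℝ) := {R | R * Rᵀ = 1 ∧ R.det = 1}

noncomputable def e3 : Fin 3 → ℝ := ![0, 0, 1]

noncomputable def enorm3 (v : Fin 3 → ℝ) : ℝ := Real.sqrt (v ⬝ᵥ v)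

/-- The Lyapunov function `V(R,ω) = (1/2)ωᵀJω + mg(‖ρ‖ − ρᵀRᵀe₃)`. -/
noncomputable def lyap (J : Matrix (Fin 3) (Fin 3) ℝ) (m g : ℝ) (ρ : Fin 3 → ℝ)
    (R : Matrix (Fin 3) (Fin 3) ℝ) (ω : Fin 3 → ℝ) : ℝ :=
  (1/2) * (ω ⬝ᵥ J.mulVec ω) + m * g * (enorm3 ρ - ρ ⬝ᵥ Rᵀ.mulVec e3)

theorem Matrix.dotProduct_transpose_mulVec_self_of_mul_transpose_eq_one {n R : Type*}
    [Fintype n] [DecidableEq n] [CommSemiring R] {A : Matrix n n R} (hA : A * Aᵀ = 1)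
    (x : n → R) : Aᵀ *ᵥ x ⬝ᵥ Aᵀ *ᵥ x = x ⬝ᵥ x := by
  rw [dotProduct_mulVec, vecMul_transpose, mulVec_mulVec, hA, one_mulVec]

theorem Matrix.PosDef.dotProduct_mulVec_self_eq_zero_iff {n : Type*} [Fintype n]
    {J : Matrix n n ℝ} (hJ : J.PosDef) {x : n → ℝ} : x ⬝ᵥ J *ᵥ x = 0 ↔ x = 0 := by
  refine ⟨fun h => ?_, fun h => by simp [h]⟩
  by_contra hx
  simpa [h] using hJ.dotProduct_mulVec_pos hx

theorem dotProduct_self_transpose_mulVec_e3_of_mem_SO3 {R : Matrix (Fin 3) (Fin 3) ℝ}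
    (hR : R ∈ SO3) : Rᵀ *ᵥ e3 ⬝ᵥ Rᵀ *ᵥ e3 = 1 := by
  rw [dotProduct_transpose_mulVec_self_of_mul_transpose_eq_one hR.1]
  simp [e3, dotProduct, Fin.sum_univ_three]

theorem inner_eq_norm_iff_eq_inv_norm_smul {F : Type*} [NormedAddCommGroup F]
    [InnerProductSpace ℝ F] {x u : F} (hx : x ≠ 0) (hu : ‖u‖ = 1) :
    inner ℝ x u = ‖x‖ ↔ u = ‖x‖⁻¹ • x := by
  have h := inner_eq_norm_mul_iff_real (x := x) (y := u)
  rw [hu, mul_one, one_smul] at h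
  rw [h, eq_inv_smul_iff₀ (norm_ne_zero_iff.mpr hx), eq_comm]

theorem dotProduct_eq_inner_toLp {ι : Type*} [Fintype ι] (v w : ι → ℝ) :
    v ⬝ᵥ w = inner ℝ (WithLp.toLp 2 v : EuclideanSpace ℝ ι) (WithLp.toLp 2 w) := by
  rw [EuclideanSpace.inner_toLp_toLp, star_trivial, dotProduct_comm]

theorem enorm3_eq_norm (v : Fin 3 → ℝ) :
    enorm3 v = ‖(WithLp.toLp 2 v : EuclideanSpace ℝ (Fin 3))‖ := by
  rw [norm_eq_sqrt_real_inner, ← dotProduct_eq_inner_toLp, enorm3]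

theorem norm_toLp_eq_one_of_dotProduct_self_eq_one {u : Fin 3 → ℝ} (hu : u ⬝ᵥ u = 1) :
    ‖(WithLp.toLp 2 u : EuclideanSpace ℝ (Fin 3))‖ = 1 := by
  rw [← enorm3_eq_norm, enorm3, hu, Real.sqrt_one]

theorem dotProduct_le_enorm3 {u : Fin 3 → ℝ} (hu : u ⬝ᵥ u = 1) (ρ : Fin 3 → ℝ) :
    ρ ⬝ᵥ u ≤ enorm3 ρ := by
  have h := real_inner_le_norm (WithLp.toLp 2 ρ : EuclideanSpace ℝ (Fin 3)) (WithLp.toLp 2 u)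
  rwa [norm_toLp_eq_one_of_dotProduct_self_eq_one hu, mul_one, ← enorm3_eq_norm,
    ← dotProduct_eq_inner_toLp] at h

theorem dotProduct_eq_enorm3_iff {ρ u : Fin 3 → ℝ} (hρ : ρ ≠ 0) (hu : u ⬝ᵥ u = 1) :
    ρ ⬝ᵥ u = enorm3 ρ ↔ u = (enorm3 ρ)⁻¹ • ρ := by
  rw [dotProduct_eq_inner_toLp, enorm3_eq_norm, inner_eq_norm_iff_eq_inv_norm_smul
    (by simpa using hρ) (norm_toLp_eq_one_of_dotProduct_self_eq_one hu), ← WithLp.toLp_smul,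
    (WithLp.toLp_injective 2).eq_iff]

theorem hat_mulVec (ω v : Fin 3 → ℝ) : hat ω *ᵥ v = ω ⨯₃ v := by
  ext i; fin_cases i <;> simp [hat, mulVec, dotProduct, Fin.sum_univ_three, cross_apply] <;> ring

theorem hat_transpose (ω : Fin 3 → ℝ) : (hat ω)ᵀ = -hat ω := by
  ext i j; fin_cases i <;> fin_cases j <;> simp [hat]

section Derivatives

variable {ι κ : Type*} [Fintype ι] [Fintype κ] {t : ℝ}

theorem HasDerivAt.dotProduct {f g : ℝ → ι → ℝ} {f' g' : ι → ℝ}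
    (hf : HasDerivAt f f' t) (hg : HasDerivAt g g' t) :
    HasDerivAt (fun s => f s ⬝ᵥ g s) (f' ⬝ᵥ g t + f t ⬝ᵥ g') t :=
  (HasDerivAt.fun_sum (u := Finset.univ) fun i _ =>
    (hasDerivAt_pi.mp hf i).mul (hasDerivAt_pi.mp hg i)).congr_deriv Finset.sum_add_distrib

theorem HasDerivAt.const_mulVec (A : Matrix κ ι ℝ) {f : ℝ → ι → ℝ} {f' : ι → ℝ}
    (hf : HasDerivAt f f' t) : HasDerivAt (fun s => A *ᵥ f s) (A *ᵥ f') t :=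
  (LinearMap.toContinuousLinearMap A.mulVecLin).hasFDerivAt.comp_hasDerivAt t hf

theorem HasDerivAt.transpose_mulVec_const {R : ℝ → Matrix κ ι ℝ} {R' : Matrix κ ι ℝ}
    (hR : HasDerivAt R R' t) (x : κ → ℝ) :
    HasDerivAt (fun s => (R s)ᵀ *ᵥ x) (R'ᵀ *ᵥ x) t := by
  simp only [mulVec_transpose]
  exact (LinearMap.toContinuousLinearMap (vecMulBilin ℝ ℝ x)).hasFDerivAt.comp_hasDerivAt t hR

theorem hasDerivAt_dotProduct_mulVec_self {J : Matrix ι ι ℝ} (hJ : J.IsSymm)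
    {ω : ℝ → ι → ℝ} {ω' : ι → ℝ} (hω : HasDerivAt ω ω' t) :
    HasDerivAt (fun s => ω s ⬝ᵥ J *ᵥ ω s) (2 * (ω t ⬝ᵥ J *ᵥ ω')) t := by
  refine (hω.dotProduct (hω.const_mulVec J)).congr_deriv ?_
  rw [dotProduct_mulVec, ← mulVec_transpose, hJ.eq, dotProduct_comm]
  ring

end Derivatives

theorem hasDerivAt_dotProduct_transpose_mulVec_of_hasDerivAt_mul_hat
    {R : ℝ → Matrix (Fin 3) (Fin 3) ℝ} {ω : Fin 3 → ℝ} {t : ℝ}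
    (hR : HasDerivAt R (R t * hat ω) t) (ρ x : Fin 3 → ℝ) :
    HasDerivAt (fun s => ρ ⬝ᵥ (R s)ᵀ *ᵥ x) (ω ⬝ᵥ ρ ⨯₃ ((R t)ᵀ *ᵥ x)) t := by
  refine ((hasDerivAt_const t ρ).dotProduct (hR.transpose_mulVec_const x)).congr_deriv ?_
  rw [zero_dotProduct, zero_add, transpose_mul, ← mulVec_mulVec, hat_transpose, neg_mulVec,
    hat_mulVec, cross_anticomm, triple_product_permutation, triple_product_permutation]

theorem lyap_nonneg {J : Matrix (Fin 3) (Fin 3) ℝ} (hJ : J.PosSemidef) {m g : ℝ}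
    (hmg : 0 ≤ m * g) (ρ : Fin 3 → ℝ) {R : Matrix (Fin 3) (Fin 3) ℝ} (hR : R ∈ SO3)
    (ω : Fin 3 → ℝ) : 0 ≤ lyap J m g ρ R ω := by
  have hkin : 0 ≤ ω ⬝ᵥ J *ᵥ ω := by simpa using hJ.dotProduct_mulVec_nonneg ω
  have hpot := dotProduct_le_enorm3 (dotProduct_self_transpose_mulVec_e3_of_mem_SO3 hR) ρ
  unfold lyap
  positivity

theorem lyap_eq_zero_iff {J : Matrix (Fin 3) (Fin 3) ℝ} (hJ : J.PosDef) {m g : ℝ}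
    (hmg : 0 < m * g) {ρ : Fin 3 → ℝ} (hρ : ρ ≠ 0) {R : Matrix (Fin 3) (Fin 3) ℝ}
    (hR : R ∈ SO3) (ω : Fin 3 → ℝ) :
    lyap J m g ρ R ω = 0 ↔ ω = 0 ∧ Rᵀ *ᵥ e3 = (enorm3 ρ)⁻¹ • ρ := by
  have hu := dotProduct_self_transpose_mulVec_e3_of_mem_SO3 hR
  have hkin : 0 ≤ ω ⬝ᵥ J *ᵥ ω := by simpa using hJ.posSemidef.dotProduct_mulVec_nonneg ω
  have hpot := dotProduct_le_enorm3 hu ρ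
  unfold lyap
  rw [add_eq_zero_iff_of_nonneg (by positivity) (by positivity), mul_eq_zero, mul_eq_zero,
    sub_eq_zero, eq_comm (a := enorm3 ρ), dotProduct_eq_enorm3_iff hρ hu,
    hJ.dotProduct_mulVec_self_eq_zero_iff]
  simp [hmg.ne']

theorem hasDerivAt_lyap_zero_of_pendulum {J : Matrix (Fin 3) (Fin 3) ℝ} (hJ : J.IsSymm)
    (m g : ℝ) (ρ : Fin 3 → ℝ) {R : ℝ → Matrix (Fin 3) (Fin 3) ℝ} {ω : ℝ → Fin 3 → ℝ}
    {ω' : Fin 3 → ℝ} {t : ℝ} (hω : HasDerivAt ω ω' t) (hR : HasDerivAt R (R t * hat (ω t)) t)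
    (hdyn : J *ᵥ ω' = (J *ᵥ ω t) ⨯₃ ω t + (m * g) • ρ ⨯₃ ((R t)ᵀ *ᵥ e3)) :
    HasDerivAt (fun s => lyap J m g ρ (R s) (ω s)) 0 t := by
  have hkin := hasDerivAt_dotProduct_mulVec_self hJ hω
  have hpot := hasDerivAt_dotProduct_transpose_mulVec_of_hasDerivAt_mul_hat hR ρ e3
  have hpower : ω t ⬝ᵥ J *ᵥ ω' = m * g * (ω t ⬝ᵥ ρ ⨯₃ ((R t)ᵀ *ᵥ e3)) := by
    rw [hdyn, dotProduct_add, dot_cross_self, zero_add, dotProduct_smul, smul_eq_mul]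
  refine ((hkin.const_mul (1 / 2)).add
    ((hpot.const_sub (enorm3 ρ)).const_mul (m * g))).congr_deriv ?_
  rw [hpower]
  ring

/-- `V` is nonnegative on `SO(3) × ℝ³`, vanishes exactly on the hanging equilibrium
manifold, and is constant along solutions of the 3D pendulum equations. -/
theorem lyapunov_properties
    (J : Matrix (Fin 3) (Fin 3) ℝ) (hJsymm : J.IsSymm) (hJpos : J.PosDef)
    (m g : ℝ) (hm : 0 < m) (hg : 0 < g) (ρ : Fin 3 → ℝ) (hρ : ρ ≠ 0) :
    (∀ R ∈ SO3, ∀ ω : Fin 3 → ℝ, 0 ≤ lyap J m g ρ R ω)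
    ∧ (∀ R ∈ SO3, ∀ ω : Fin 3 → ℝ,
        lyap J m g ρ R ω = 0 ↔ ω = 0 ∧ Rᵀ.mulVec e3 = (enorm3 ρ)⁻¹ • ρ)
    ∧ (∀ (R : ℝ → Matrix (Fin 3) (Fin 3) ℝ) (ω ω' : ℝ → Fin 3 → ℝ),
        (∀ t, R t ∈ SO3) →
        (∀ t, HasDerivAt ω (ω' t) t) →
        (∀ t, HasDerivAt R (R t * hat (ω t)) t) →
        (∀ t, J.mulVec (ω' t) =
          crossProduct (J.mulVec (ω t)) (ω t)
            + (m * g) • crossProduct ρ ((R t)ᵀ.mulVec e3)) →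
        ∀ t : ℝ, HasDerivAt (fun s => lyap J m g ρ (R s) (ω s)) 0 t) := by
  have hmg : 0 < m * g := mul_pos hm hg
  exact ⟨fun R hR ω => lyap_nonneg hJpos.posSemidef hmg.le ρ hR ω,
    fun R hR ω => lyap_eq_zero_iff hJpos hmg hρ hR ω,
    fun R ω ω' _ hω hR hdyn t =>
      hasDerivAt_lyap_zero_of_pendulum hJsymm m g ρ (hω t) (hR t) (hdyn t)⟩
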